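/- Let f be analytic in Ω(r_0, θ_1, θ_2) = {z : θ_1 < arg z < θ_2, |z| ≥ r_0}, let U be a hyperbolic domain (a domain whose complement in the extended plane contains at least three points), and suppose f maps Ω(r_0, θ_1, θ_2) into U. If there exists a finite point a ∈ ∂U with C_U(a) > 0, then there exists a constant d > 0 such that for all sufficiently small ε > 0, |f(z)| = O(|z|^d) as z → ∞ with z ∈ Ω(r_0, θ_1 + ε, θ_2 − ε). -/

import Mathlib

open MeasureTheory Filter Set Metric Asymptotics
open scoped ENNReal

/-- `log⁺ x = max (log x) 0`. -/
noncomputable def posLog (x : ℝ) : ℝ := max (Real.log x) 0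

/-- The point `r·e^{iθ}` of the circle of radius `r` at angle `θ`. -/
noncomputable def circPt (r θ : ℝ) : ℂ := (r : ℂ) * Complex.exp (θ * Complex.I)

/-- The Nevanlinna proximity function `m(r, f)`.  For an entire function `f` this coincides
with the Nevanlinna characteristic `T(r, f)`. -/
noncomputable def nevProx (f : ℂ → ℂ) (r : ℝ) : ℝ :=
  (2 * Real.pi)⁻¹ * ∫ θ in (0:ℝ)..(2 * Real.pi), posLog ‖f (circPt r θ)‖

/-- The lower order `μ = liminf_{r→∞} log T(r) / log r` of a growth function `T`. -/
noncomputable def lowerOrder (T : ℝ → ℝ) : ℝ≥0∞ :=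
  Filter.liminf (fun r : ℝ => ENNReal.ofReal (Real.log (T r) / Real.log r)) Filter.atTop

/-- An entire function that is not a polynomial. -/
def TranscendentalEntire (f : ℂ → ℂ) : Prop :=
  Differentiable ℂ f ∧ ¬ ∃ p : Polynomial ℂ, ∀ z, f z = Polynomial.eval z p

/-- The open angle `Ω(α, β) = {z : α < arg z < β}` (arguments taken mod `2π`). -/
def angSector (α β : ℝ) : Set ℂ :=
  {z | ∃ ρ φ : ℝ, 0 < ρ ∧ α < φ ∧ φ < β ∧ z = circPt ρ φ}

/-- The sequence of functions `F` tends to `∞` locally uniformly on `U`. -/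
def LocUnifToInf (F : ℕ → ℂ → ℂ) (U : Set ℂ) : Prop :=
  ∀ K ⊆ U, IsCompact K → ∀ M : ℝ, ∀ᶠ m in atTop, ∀ z ∈ K, M ≤ ‖F m z‖

/-- The family `F` is normal on `U`: every sequence drawn from the family has a subsequence
converging locally uniformly on `U`, either to a finite limit function or to `∞`. -/
def NormalFamilyOn (F : ℕ → ℂ → ℂ) (U : Set ℂ) : Prop :=
  ∀ s : ℕ → ℕ, ∃ t : ℕ → ℕ, StrictMono t ∧
    ((∃ g : ℂ → ℂ, TendstoLocallyUniformlyOn (fun m => F (s (t m))) g atTop U) ∨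
      LocUnifToInf (fun m => F (s (t m))) U)

/-- The Fatou set of `f`: points with a neighbourhood on which the iterates form a normal
family. -/
def fatouSet (f : ℂ → ℂ) : Set ℂ :=
  {z | ∃ U : Set ℂ, IsOpen U ∧ z ∈ U ∧ NormalFamilyOn (fun m => f^[m]) U}

/-- The Julia set of `f`. -/
def juliaSet (f : ℂ → ℂ) : Set ℂ := (fatouSet f)ᶜ

/-- `Δ(f)`: the set of `θ ∈ [0, 2π)` such that `J(f)` is unbounded in every angle
`Ω(θ - ε, θ + ε)`. -/
def radialJulia (f : ℂ → ℂ) : Set ℝ :=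
  {θ | θ ∈ Ico 0 (2 * Real.pi) ∧
    ∀ ε > 0, ∀ R : ℝ, ∃ z ∈ juliaSet f ∩ angSector (θ - ε) (θ + ε), R < ‖z‖}

/-- `Ω(r₀, α, β) = {z : α < arg z < β, |z| ≥ r₀}`. -/
def angSectorFrom (r₀ α β : ℝ) : Set ℂ :=
  angSector α β ∩ {z | r₀ ≤ ‖z‖}

/-- The hyperbolic density `λ_U` on a hyperbolic domain `U` (for the complete metric of
constant curvature `−1`), characterised by
`λ_U(z) = 2 / sup {|φ'(0)| : φ : 𝔻 → U holomorphic, φ(0) = z}`. -/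
noncomputable def hypDensity (U : Set ℂ) (z : ℂ) : ℝ :=
  2 / sSup {c : ℝ | ∃ φ : ℂ → ℂ, DifferentiableOn ℂ φ (Metric.ball 0 1) ∧
      Set.MapsTo φ (Metric.ball 0 1) U ∧ φ 0 = z ∧ c = ‖deriv φ 0‖}

/-- `C_U(a) = inf {λ_U(z)·|z − a| : z ∈ U}`. -/
noncomputable def hypC (U : Set ℂ) (a : ℂ) : ℝ :=
  sInf {t : ℝ | ∃ z ∈ U, t = hypDensity U z * ‖z - a‖}

/-!
Comparing `f` on a disc `B(w, r) ⊆ Ω(r₀, θ₁, θ₂)` with the disc maps in the definition of `λ_U`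
gives `C_U(a) · r · |f'(w)| ≤ 2 |f(w) - a|`. A point of modulus `ρ` whose argument stays `δ` away
from `θ₁, θ₂` is the centre of such a disc with `r = δρ/4`, so there
`|z| |f'(z)| ≤ K_δ |f(z) - a|` with `K_δ = 8 / (C_U(a) δ)`. Grönwall's inequality for `f - a` along
the central ray, with `δ` fixed, gives `|f(z) - a| = O(|z|^{K_δ})`; moving from the central ray
along an arc of `|z| = ρ` inside `Ω(r₀, θ₁ + ε, θ₂ - ε)` costs only the bounded factor
`exp(K_ε (θ₂ - θ₁))`, so the exponent `K_δ` does not depend on `ε`.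
-/

lemma hypDensity_nonneg (U : Set ℂ) (z : ℂ) : 0 ≤ hypDensity U z :=
  div_nonneg zero_le_two <| Real.sSup_nonneg <| by
    rintro c ⟨φ, -, -, -, rfl⟩
    exact norm_nonneg _

lemma hypC_le_hypDensity_mul {U : Set ℂ} {z : ℂ} (hz : z ∈ U) (a : ℂ) :
    hypC U a ≤ hypDensity U z * ‖z - a‖ :=
  csInf_le ⟨0, by rintro t ⟨w, -, rfl⟩; exact mul_nonneg (hypDensity_nonneg U w) (norm_nonneg _)⟩
    ⟨z, hz, rfl⟩

-- If the supremum defining `hypDensity` is infinite, Lean's `sSup` is `0` and so is the density.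
lemma hypDensity_mul_norm_deriv_le {U : Set ℂ} {φ : ℂ → ℂ}
    (hφ : DifferentiableOn ℂ φ (ball 0 1)) (hφU : MapsTo φ (ball 0 1) U) :
    hypDensity U (φ 0) * ‖deriv φ 0‖ ≤ 2 := by
  set S := {c : ℝ | ∃ ψ : ℂ → ℂ, DifferentiableOn ℂ ψ (ball 0 1) ∧
      MapsTo ψ (ball 0 1) U ∧ ψ 0 = φ 0 ∧ c = ‖deriv ψ 0‖}
  have hmem : ‖deriv φ 0‖ ∈ S := ⟨φ, hφ, hφU, rfl, rfl⟩
  change 2 / sSup S * ‖deriv φ 0‖ ≤ 2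
  by_cases hS : BddAbove S
  · rcases (norm_nonneg _).trans (le_csSup hS hmem) |>.eq_or_lt with h | h
    · simp [← h]
    · rw [div_mul_eq_mul_div, div_le_iff₀ h]
      exact mul_le_mul_of_nonneg_left (le_csSup hS hmem) zero_le_two
  · simp [Real.sSup_of_not_bddAbove hS]

lemma hypC_mul_norm_deriv_le {U : Set ℂ} {φ : ℂ → ℂ}
    (hφ : DifferentiableOn ℂ φ (ball 0 1)) (hφU : MapsTo φ (ball 0 1) U) (a : ℂ) :
    hypC U a * ‖deriv φ 0‖ ≤ 2 * ‖φ 0 - a‖ :=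
  calc hypC U a * ‖deriv φ 0‖
      ≤ hypDensity U (φ 0) * ‖φ 0 - a‖ * ‖deriv φ 0‖ := by
        gcongr
        exact hypC_le_hypDensity_mul (hφU (mem_ball_self one_pos)) a
    _ = hypDensity U (φ 0) * ‖deriv φ 0‖ * ‖φ 0 - a‖ := by ring
    _ ≤ 2 * ‖φ 0 - a‖ := by gcongr; exact hypDensity_mul_norm_deriv_le hφ hφU

lemma hypC_mul_radius_mul_norm_deriv_le {U : Set ℂ} {g : ℂ → ℂ} {w : ℂ} {r : ℝ} (hr : 0 < r)
    (hg : DifferentiableOn ℂ g (ball w r)) (hgU : MapsTo g (ball w r) U) (a : ℂ) :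
    hypC U a * (r * ‖deriv g w‖) ≤ 2 * ‖g w - a‖ := by
  set ι : ℂ → ℂ := fun v => w + r * v
  have hι : MapsTo ι (ball 0 1) (ball w r) := by
    intro v hv
    rw [mem_ball_zero_iff] at hv
    simpa [ι, abs_of_pos hr] using mul_lt_of_lt_one_right hr hv
  have hιd : ∀ v, HasDerivAt ι r v := fun v =>
    ((hasDerivAt_id v).const_mul (r : ℂ)).const_add w |>.congr_deriv (mul_one _)
  have hgw : HasDerivAt g (deriv g w) (ι 0) := by
    simpa [ι] using (hg.differentiableAt (ball_mem_nhds w hr)).hasDerivAt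
  have hderiv : deriv (g ∘ ι) 0 = deriv g w * r := (hgw.comp 0 (hιd 0)).deriv
  have := hypC_mul_norm_deriv_le
    (hg.comp (fun v _ => (hιd v).differentiableAt.differentiableWithinAt) hι) (hgU.comp hι) a
  rw [hderiv, norm_mul, Complex.norm_real, Real.norm_of_nonneg hr.le] at this
  simpa [ι, mul_comm] using this

lemma norm_circPt {ρ : ℝ} (hρ : 0 ≤ ρ) (ψ : ℝ) : ‖circPt ρ ψ‖ = ρ := by
  simp [circPt, Complex.norm_exp_ofReal_mul_I, abs_of_nonneg hρ]

lemma circPt_mul (ρ ψ : ℝ) (z : ℂ) : circPt ρ ψ * z = circPt (ρ * ‖z‖) (ψ + z.arg) := by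
  conv_lhs => rw [← Complex.norm_mul_exp_arg_mul_I z]
  simp only [circPt]
  push_cast
  rw [add_mul, Complex.exp_add]
  ring

lemma abs_arg_one_add_le {u : ℂ} (hu : ‖u‖ ≤ 1 / 2) : |(1 + u).arg| ≤ Real.pi * ‖u‖ := by
  have hre : 1 / 2 ≤ (1 + u).re := by
    rw [Complex.add_re, Complex.one_re]
    linarith [neg_abs_le u.re, Complex.abs_re_le_norm u]
  have hnorm : 1 / 2 ≤ ‖1 + u‖ := hre.trans (Complex.re_le_norm _)
  have hsin : |Real.sin (1 + u).arg| ≤ 2 * ‖u‖ := by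
    rw [Complex.sin_arg, abs_div, abs_norm, div_le_iff₀ (by linarith)]
    calc |(1 + u).im| = |u.im| := by simp
      _ ≤ ‖u‖ := Complex.abs_im_le_norm u
      _ ≤ 2 * ‖u‖ * ‖1 + u‖ := by nlinarith [norm_nonneg u]
  have hjordan := Real.mul_abs_le_abs_sin (Complex.abs_arg_le_pi_div_two_iff.2 (by linarith))
  rw [div_mul_eq_mul_div, div_le_iff₀ Real.pi_pos] at hjordan
  nlinarith [Real.pi_pos]

lemma ball_subset_angSectorFrom {r₀ θ₁ θ₂ ρ ψ δ : ℝ} (hρ : 0 < ρ) (hr₀ : 2 * r₀ ≤ ρ)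
    (hδ1 : δ ≤ 1) (hψ : ψ ∈ Icc (θ₁ + δ) (θ₂ - δ)) :
    ball (circPt ρ ψ) (δ / 4 * ρ) ⊆ angSectorFrom r₀ θ₁ θ₂ := by
  intro x hx
  set w := circPt ρ ψ
  have hw : ‖w‖ = ρ := norm_circPt hρ.le ψ
  set u := (x - w) / w
  have hxu : x = w * (1 + u) := by
    rw [mul_add, mul_one, mul_div_cancel₀ _ (norm_pos_iff.1 (hw ▸ hρ)), add_sub_cancel]
  have hu : ‖u‖ < δ / 4 := by
    rw [norm_div, hw, div_lt_iff₀ hρ, ← dist_eq_norm]; exact hx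
  have harg : |(1 + u).arg| < δ :=
    (abs_arg_one_add_le (by linarith)).trans_lt (by nlinarith [Real.pi_lt_four, norm_nonneg u])
  have hnorm : 1 / 2 ≤ ‖1 + u‖ := by
    have := norm_sub_norm_le (1 : ℂ) (-u)
    rw [norm_one, norm_neg, sub_neg_eq_add] at this
    linarith
  rw [hxu, circPt_mul]
  refine ⟨⟨ρ * ‖1 + u‖, ψ + (1 + u).arg, by positivity, ?_, ?_, rfl⟩, ?_⟩
  · linarith [hψ.1, (abs_lt.1 harg).1]
  · linarith [hψ.2, (abs_lt.1 harg).2]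
  · show r₀ ≤ ‖circPt _ _‖
    rw [norm_circPt (by positivity)]; nlinarith

lemma hasDerivAt_circPt_radial (R ψ t : ℝ) :
    HasDerivAt (fun s : ℝ => circPt (R * Real.exp s) ψ) (circPt (R * Real.exp t) ψ) t := by
  have h : HasDerivAt (fun s : ℝ => circPt R ψ * Complex.exp s) (circPt R ψ * Complex.exp t) t :=
    ((Complex.hasDerivAt_exp t).comp_ofReal).const_mul _
  convert h using 1
  · ext s; simp only [circPt]; push_cast; ring
  · simp only [circPt]; push_cast; ring

lemma hasDerivAt_circPt_angular (ρ ψ Δ t : ℝ) :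
    HasDerivAt (fun s : ℝ => circPt ρ (ψ + s * Δ)) (Δ * Complex.I * circPt ρ (ψ + t * Δ)) t := by
  have key : ∀ s : ℝ, circPt ρ (ψ + s * Δ) = circPt ρ ψ * Complex.exp (s * (Δ * Complex.I)) := by
    intro s
    simp only [circPt]; push_cast
    rw [add_mul, Complex.exp_add, mul_assoc (s : ℂ), mul_assoc]
  have hlin : HasDerivAt (fun s : ℝ => (s : ℂ) * (Δ * Complex.I)) (Δ * Complex.I) t := by
    simpa using (Complex.ofRealCLM.hasDerivAt (x := t)).mul_const ((Δ : ℂ) * Complex.I)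
  simp only [key]
  exact (hlin.cexp.const_mul (circPt ρ ψ)).congr_deriv (by ring)

lemma norm_sub_le_mul_exp_of_hasDerivAt {f : ℂ → ℂ} {γ γ' : ℝ → ℂ} {a : ℂ} {K b : ℝ}
    (hb : 0 ≤ b) (hγ : ∀ t ∈ Icc 0 b, HasDerivAt γ (γ' t) t)
    (hf : ∀ t ∈ Icc 0 b, DifferentiableAt ℂ f (γ t))
    (hK : ∀ t ∈ Ico 0 b, ‖γ' t‖ * ‖deriv f (γ t)‖ ≤ K * ‖f (γ t) - a‖) :
    ‖f (γ b) - a‖ ≤ ‖f (γ 0) - a‖ * Real.exp (K * b) := by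
  have hg : ∀ t ∈ Icc 0 b, HasDerivAt (fun s => f (γ s) - a) (γ' t * deriv f (γ t)) t :=
    fun t ht => by
      simpa [mul_comm] using ((hf t ht).hasDerivAt.comp t (hγ t ht)).sub_const a
  have := norm_le_gronwallBound_of_norm_deriv_right_le (δ := ‖f (γ 0) - a‖) (ε := 0)
    (fun t ht => (hg t ht).continuousAt.continuousWithinAt)
    (fun t ht => (hg t (Ico_subset_Icc_self ht)).hasDerivWithinAt) le_rfl
    (fun t ht => by simpa [norm_mul] using hK t ht) b (right_mem_Icc.2 hb)
  simpa [gronwallBound_ε0] using this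

section Sector

variable {r₀ θ₁ θ₂ : ℝ} {f : ℂ → ℂ} {U : Set ℂ} {a : ℂ}

lemma differentiableAt_circPt_of_angSectorFrom (hf : DifferentiableOn ℂ f (angSectorFrom r₀ θ₁ θ₂))
    {ρ ψ δ : ℝ} (hρ : 0 < ρ) (hr₀ : 2 * r₀ ≤ ρ) (hδ : 0 < δ) (hδ1 : δ ≤ 1)
    (hψ : ψ ∈ Icc (θ₁ + δ) (θ₂ - δ)) :
    DifferentiableAt ℂ f (circPt ρ ψ) :=
  hf.differentiableAt <| mem_of_superset (ball_mem_nhds _ (by positivity))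
    (ball_subset_angSectorFrom hρ hr₀ hδ1 hψ)

lemma norm_mul_norm_deriv_le (hf : DifferentiableOn ℂ f (angSectorFrom r₀ θ₁ θ₂))
    (hmaps : MapsTo f (angSectorFrom r₀ θ₁ θ₂) U) (hCa : 0 < hypC U a)
    {ρ ψ δ : ℝ} (hρ : 0 < ρ) (hr₀ : 2 * r₀ ≤ ρ) (hδ : 0 < δ) (hδ1 : δ ≤ 1)
    (hψ : ψ ∈ Icc (θ₁ + δ) (θ₂ - δ)) :
    ρ * ‖deriv f (circPt ρ ψ)‖ ≤ 8 / (hypC U a * δ) * ‖f (circPt ρ ψ) - a‖ := by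
  have hball := ball_subset_angSectorFrom hρ hr₀ hδ1 hψ
  have := hypC_mul_radius_mul_norm_deriv_le (by positivity) (hf.mono hball)
    (hmaps.mono_left hball) a
  rw [div_mul_eq_mul_div, le_div_iff₀ (by positivity)]
  linarith

lemma norm_sub_le_mul_rpow_of_radial (hf : DifferentiableOn ℂ f (angSectorFrom r₀ θ₁ θ₂))
    (hmaps : MapsTo f (angSectorFrom r₀ θ₁ θ₂) U) (hCa : 0 < hypC U a)
    {R ρ ψ δ : ℝ} (hR : 0 < R) (hr₀ : 2 * r₀ ≤ R) (hRρ : R ≤ ρ) (hδ : 0 < δ) (hδ1 : δ ≤ 1)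
    (hψ : ψ ∈ Icc (θ₁ + δ) (θ₂ - δ)) :
    ‖f (circPt ρ ψ) - a‖ ≤ ‖f (circPt R ψ) - a‖ * (ρ / R) ^ (8 / (hypC U a * δ)) := by
  have hρR : 0 < ρ / R := div_pos (hR.trans_le hRρ) hR
  have hT : 0 ≤ Real.log (ρ / R) := Real.log_nonneg ((one_le_div hR).2 hRρ)
  have hmod : ∀ t ∈ Icc 0 (Real.log (ρ / R)), 2 * r₀ ≤ R * Real.exp t := fun t ht =>
    hr₀.trans (le_mul_of_one_le_right hR.le (Real.one_le_exp ht.1))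
  have := norm_sub_le_mul_exp_of_hasDerivAt (a := a) (K := 8 / (hypC U a * δ)) hT
    (fun t _ => hasDerivAt_circPt_radial R ψ t)
    (fun t ht => differentiableAt_circPt_of_angSectorFrom hf (by positivity) (hmod t ht) hδ hδ1 hψ)
    (fun t ht => by
      rw [norm_circPt (by positivity)]
      exact norm_mul_norm_deriv_le hf hmaps hCa (by positivity)
        (hmod t (Ico_subset_Icc_self ht)) hδ hδ1 hψ)
  rwa [Real.exp_log hρR, mul_div_cancel₀ _ hR.ne', Real.exp_zero, mul_one, mul_comm (8 / _),
    ← Real.rpow_def_of_pos hρR] at this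

lemma norm_sub_le_mul_exp_of_angular (hf : DifferentiableOn ℂ f (angSectorFrom r₀ θ₁ θ₂))
    (hmaps : MapsTo f (angSectorFrom r₀ θ₁ θ₂) U) (hCa : 0 < hypC U a)
    {ρ ψ φ δ : ℝ} (hρ : 0 < ρ) (hr₀ : 2 * r₀ ≤ ρ) (hδ : 0 < δ) (hδ1 : δ ≤ 1)
    (hψ : ψ ∈ Icc (θ₁ + δ) (θ₂ - δ)) (hφ : φ ∈ Icc (θ₁ + δ) (θ₂ - δ)) :
    ‖f (circPt ρ φ) - a‖ ≤ ‖f (circPt ρ ψ) - a‖ * Real.exp (8 / (hypC U a * δ) * |φ - ψ|) := by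
  have hseg : ∀ t ∈ Icc (0 : ℝ) 1, ψ + t * (φ - ψ) ∈ Icc (θ₁ + δ) (θ₂ - δ) := fun t ht => by
    simpa [smul_eq_mul] using (convex_Icc _ _).add_smul_sub_mem hψ hφ ht
  have := norm_sub_le_mul_exp_of_hasDerivAt (a := a) (K := 8 / (hypC U a * δ) * |φ - ψ|)
    zero_le_one (fun t _ => hasDerivAt_circPt_angular ρ ψ (φ - ψ) t)
    (fun t ht => differentiableAt_circPt_of_angSectorFrom hf hρ hr₀ hδ hδ1 (hseg t ht))
    (fun t ht => by
      rw [norm_mul, norm_mul, Complex.norm_real, Complex.norm_I, mul_one, norm_circPt hρ.le,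
        Real.norm_eq_abs, mul_assoc, mul_right_comm _ |φ - ψ|, mul_comm |φ - ψ|]
      exact mul_le_mul_of_nonneg_right
        (norm_mul_norm_deriv_le hf hmaps hCa hρ hr₀ hδ hδ1 (hseg t (Ico_subset_Icc_self ht)))
        (abs_nonneg _))
  simpa using this

lemma norm_sub_le_of_mem_angSectorFrom (hf : DifferentiableOn ℂ f (angSectorFrom r₀ θ₁ θ₂))
    (hmaps : MapsTo f (angSectorFrom r₀ θ₁ θ₂) U) (hCa : 0 < hypC U a)
    {R ρ φ δ ε : ℝ} (hR : 0 < R) (hr₀ : 2 * r₀ ≤ R) (hRρ : R ≤ ρ) (hε : 0 < ε) (hεδ : ε ≤ δ)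
    (hδ1 : δ ≤ 1) (hδθ : δ ≤ (θ₂ - θ₁) / 2) (hφ : φ ∈ Icc (θ₁ + ε) (θ₂ - ε)) :
    ‖f (circPt ρ φ) - a‖ ≤ ‖f (circPt R ((θ₁ + θ₂) / 2)) - a‖ * (ρ / R) ^ (8 / (hypC U a * δ)) *
      Real.exp (8 / (hypC U a * ε) * (θ₂ - θ₁)) := by
  have hmid : ∀ η ≤ δ, (θ₁ + θ₂) / 2 ∈ Icc (θ₁ + η) (θ₂ - η) := fun η hη => by
    constructor <;> linarith
  have hradial := norm_sub_le_mul_rpow_of_radial hf hmaps hCa hR hr₀ hRρ (hε.trans_le hεδ) hδ1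
    (hmid δ le_rfl)
  have hρ : 0 < ρ := hR.trans_le hRρ
  have hangular := norm_sub_le_mul_exp_of_angular hf hmaps hCa hρ (hr₀.trans hRρ) hε
    (hεδ.trans hδ1) (hmid ε hεδ) hφ
  refine hangular.trans (mul_le_mul hradial ?_ (Real.exp_pos _).le (by positivity))
  exact Real.exp_le_exp.2 <| mul_le_mul_of_nonneg_left
    (abs_sub_le_iff.2 ⟨by linarith [hφ.2], by linarith [hφ.1]⟩) (by positivity)

end Sector

theorem polynomial_growth_of_maps_to_hyperbolic_general (r₀ θ₁ θ₂ : ℝ) (hθ : θ₁ < θ₂)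
    (f : ℂ → ℂ) (hf : DifferentiableOn ℂ f (angSectorFrom r₀ θ₁ θ₂))
    (U : Set ℂ)
    (hmaps : Set.MapsTo f (angSectorFrom r₀ θ₁ θ₂) U)
    (a : ℂ) (hCa : 0 < hypC U a) :
    ∃ d : ℝ, 0 < d ∧ ∃ ε₀ > 0, ∀ ε, 0 < ε → ε < ε₀ →
      ∃ C R : ℝ, ∀ z ∈ angSectorFrom r₀ (θ₁ + ε) (θ₂ - ε),
        R ≤ ‖z‖ → ‖f z‖ ≤ C * ‖z‖ ^ d := by
  set δ₀ := min ((θ₂ - θ₁) / 2) 1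
  have hδ₀ : 0 < δ₀ := lt_min (by linarith) one_pos
  set R := max (2 * r₀) 1
  have hR : 0 < R := one_pos.trans_le (le_max_right _ _)
  set d := 8 / (hypC U a * δ₀)
  have hd : 0 < d := by positivity
  refine ⟨d, hd, δ₀, hδ₀, fun ε hε hεδ₀ => ?_⟩
  set M := ‖f (circPt R ((θ₁ + θ₂) / 2)) - a‖
  set E := Real.exp (8 / (hypC U a * ε) * (θ₂ - θ₁))
  refine ⟨M * E + ‖a‖, R, ?_⟩
  rintro _ ⟨⟨ρ, φ, hρ, hφ₁, hφ₂, rfl⟩, -⟩ hRρ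
  rw [norm_circPt hρ.le] at hRρ ⊢
  have hbound := norm_sub_le_of_mem_angSectorFrom hf hmaps hCa hR (le_max_left _ _) hRρ hε
    hεδ₀.le (min_le_right _ _) (min_le_left _ _) ⟨hφ₁.le, hφ₂.le⟩
  have hpow : (ρ / R) ^ d ≤ ρ ^ d :=
    Real.rpow_le_rpow (by positivity) (div_le_self hρ.le (le_max_right _ _)) hd.le
  have hone : 1 ≤ ρ ^ d := Real.one_le_rpow ((le_max_right _ _).trans hRρ) hd.le
  calc ‖f (circPt ρ φ)‖ ≤ ‖f (circPt ρ φ) - a‖ + ‖a‖ := norm_le_norm_sub_add _ _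
    _ ≤ M * ρ ^ d * E + ‖a‖ * ρ ^ d := by
      gcongr
      · exact hbound.trans (by gcongr)
      · exact le_mul_of_one_le_right (norm_nonneg a) hone
    _ = (M * E + ‖a‖) * ρ ^ d := by ring

/-- **Lemma 2.1.**  Let `f` be analytic in `Ω(r₀, θ₁, θ₂)`, let `U` be a hyperbolic domain
with `f : Ω(r₀, θ₁, θ₂) → U`.  If there is a finite boundary point `a ∈ ∂U` with
`C_U(a) > 0`, then there is `d > 0` such that for all sufficiently small `ε > 0` one has
`|f(z)| = O(|z|^d)` as `z → ∞` in `Ω(r₀, θ₁ + ε, θ₂ − ε)`. -/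
theorem polynomial_growth_of_maps_to_hyperbolic (r₀ θ₁ θ₂ : ℝ) (hθ : θ₁ < θ₂)
    (f : ℂ → ℂ) (hf : DifferentiableOn ℂ f (angSectorFrom r₀ θ₁ θ₂))
    (U : Set ℂ) (hUopen : IsOpen U) (hUconn : IsConnected U)
    (hUhyp : ∃ a b : ℂ, a ≠ b ∧ a ∉ U ∧ b ∉ U)
    (hmaps : Set.MapsTo f (angSectorFrom r₀ θ₁ θ₂) U)
    (a : ℂ) (ha : a ∈ frontier U) (hCa : 0 < hypC U a) :
    ∃ d : ℝ, 0 < d ∧ ∃ ε₀ > 0, ∀ ε, 0 < ε → ε < ε₀ →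
      ∃ C R : ℝ, ∀ z ∈ angSectorFrom r₀ (θ₁ + ε) (θ₂ - ε),
        R ≤ ‖z‖ → ‖f z‖ ≤ C * ‖z‖ ^ d :=
  polynomial_growth_of_maps_to_hyperbolic_general r₀ θ₁ θ₂ hθ f hf U hmaps a hCa
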